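/- Let k be a field of characteristic p > 0 with p ≡ 1 (mod 60), and write p = 60l + 1. Then Han's δ-function satisfies δ((p-1)/2, p/3, p/5) = 2/15; equivalently, for the split Syz_{k[Y,Z]}((Y³+Z⁵)^{(p-1)/2}, Y^p, Z^p) ≅ k[Y,Z](m) ⊕ k[Y,Z](n) with k[Y,Z] graded by deg Y = 10, deg Z = 6, one has |m - n| = 4. -/

import Mathlib

/-- The linear map `(a₁,…,aₙ) ↦ Σ aᵢ·gᵢ`; the syzygy module
`Syz_R(g₁,…,gₙ)` is its kernel. -/
noncomputable def syzMap {R : Type*} [CommRing R] {n : ℕ} (g : Fin n → R) :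
    (Fin n → R) →ₗ[R] R :=
  ∑ i, (LinearMap.proj i : (Fin n → R) →ₗ[R] R).smulRight (g i)

/-!
Write `f = (Y³ + Z⁵)^{30 l}`. Hilbert–Burch: for a basis `b₀, b₁` of the syzygies of
`G = (f, Y^p, Z^p)`, the cross product `b₀ × b₁` is a multiple `c • G`. The Koszul syzygies `G × w`
lie in the span of `b₀, b₁`, which makes `c` divide every entry of `b₀` and `b₁`, hence both `Y^p`
and `Z^p`; so `c` is a unit, and comparing degrees in the last coordinate gives
`u + v = D₀ + D₁ + D₂ = 1860 l + 16`.

A nonzero homogeneous syzygy `(A, B, C)` has even degree `d ≥ 930 l + 6` with `d ≠ 930 l + 8`.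
If `A = 0` this is clear since `Z^p ∣ B`. Otherwise `A f ∈ (Y^p, Z^p)`; if `Y^x Z^z` is the
monomial of `A` of least `Y`-degree, setting `Z = 1` turns this into the vanishing of
`⌊z/5⌋ + 1` consecutive coefficients of `g · (X + 1)^{30 l}` for some nonzero `g` of degree
`≤ ⌊z/5⌋`, which is impossible in characteristic `p` when the degree of `A` is `< 30 l + 6` or
`= 30 l + 8`. Both facts together leave only `{u, v} = {930 l + 6, 930 l + 10}`.
-/
open scoped Matrix Polynomial

theorem CharP.cast_choose_ne_zero {R : Type*} [AddMonoidWithOne R] {p : ℕ} [CharP R p]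
    (hp : p.Prime) {n a : ℕ} (hn : n < p) (ha : a ≤ n) : (n.choose a : R) ≠ 0 := by
  rw [Ne, CharP.cast_eq_zero_iff R p]
  exact fun h => hp.one_lt.ne' (Nat.Coprime.eq_one_of_dvd (hp.coprime_choose_of_lt hn ha) h)

namespace Polynomial

section CommRing

variable {k : Type*} [CommRing k]

theorem X_add_one_mul_derivative_X_add_one_pow (n : ℕ) :
    (X + 1 : k[X]) * derivative ((X + 1) ^ n) = (n : k[X]) * (X + 1) ^ n := by
  rcases n with _ | n
  · simp
  · rw [← C_1, derivative_X_add_C_pow, C_1, pow_succ, add_tsub_cancel_right, map_natCast]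
    ring

theorem derivative_mul_X_add_one_pow_succ (g : k[X]) (n : ℕ) :
    derivative g * (X + 1) ^ (n + 1) =
      (X + 1) * derivative (g * (X + 1) ^ n) - (n : k[X]) * (g * (X + 1) ^ n) := by
  rw [derivative_mul, mul_add, mul_left_comm _ g, X_add_one_mul_derivative_X_add_one_pow]
  ring

theorem coeff_X_add_one_mul_derivative {h : k[X]} {j : ℕ} (hj : h.coeff j = 0)
    (hj' : h.coeff (j + 1) = 0) : ((X + 1) * derivative h).coeff j = 0 := by
  rcases j with _ | j
  · simp [coeff_derivative, hj']
  · rw [add_mul, one_mul, coeff_add, coeff_X_mul, coeff_derivative, coeff_derivative, hj, hj']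
    simp

end CommRing

variable {k : Type*} [CommRing k] [IsDomain k] {p : ℕ} [CharP k p]

theorem natDegree_eq_zero_of_derivative_eq_zero_of_natDegree_lt {g : k[X]}
    (hg : derivative g = 0) (hdeg : g.natDegree < p) : g.natDegree = 0 := by
  rw [← expand_contract p hg (by omega), natDegree_expand] at hdeg ⊢
  exact Nat.mul_eq_zero.mpr (.inl (by nlinarith))

/-- Differentiating `g * (X + 1) ^ n` trades `g` for `g'`, `n` for `n + 1` and shortens the window
by one; at the end `g` is constant, and `g(0) * n.choose a = 0` with `n < p` forces `g = 0`. -/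
theorem eq_zero_of_coeff_mul_X_add_one_pow_eq_zero {c n a : ℕ} {g : k[X]} (hdeg : g.degree < c)
    (hnc : n + c ≤ p) (hac : a + c ≤ n + 1)
    (hvan : ∀ j, a ≤ j → j < a + c → (g * (X + 1) ^ n).coeff j = 0) : g = 0 := by
  induction c generalizing n g with
  | zero => exact ext fun m => (degree_lt_iff_coeff_zero g 0).mp hdeg m m.zero_le
  | succ c ih =>
    have hp : p.Prime := (CharP.char_is_prime_or_zero k p).resolve_right (by omega)
    have hderiv : derivative g = 0 := by
      refine ih (n := n + 1) ?_ (by omega) (by omega) fun j hj hj' => ?_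
      · rw [degree_lt_iff_coeff_zero] at hdeg ⊢
        intro m hm
        rw [coeff_derivative, hdeg (m + 1) (by omega), zero_mul]
      · have hj₀ := hvan j hj (by omega)
        have hj₁ := hvan (j + 1) (by omega) (by omega)
        rw [derivative_mul_X_add_one_pow_succ, coeff_sub, coeff_natCast_mul,
          coeff_X_add_one_mul_derivative hj₀ hj₁, hj₀, mul_zero, sub_zero]
    have hconst : g = C (g.coeff 0) := by
      refine eq_C_of_natDegree_eq_zero (natDegree_eq_zero_of_derivative_eq_zero_of_natDegree_lt
        hderiv ?_)
      rcases eq_or_ne g 0 with rfl | hg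
      · simpa using hp.pos
      · exact (natDegree_lt_iff_degree_lt hg).mpr (hdeg.trans_le (by exact_mod_cast (by omega)))
    have hcoeff := hvan a le_rfl (by omega)
    rw [hconst, coeff_C_mul, coeff_X_add_one_pow] at hcoeff
    rw [hconst, (mul_eq_zero.mp hcoeff).resolve_right
      (CharP.cast_choose_ne_zero hp (by omega) (by omega)), map_zero]

end Polynomial

theorem Finsupp.weight_fin_two {M : Type*} [AddCommMonoid M] (w : Fin 2 → M) (d : Fin 2 →₀ ℕ) :
    Finsupp.weight w d = d 0 • w 0 + d 1 • w 1 := by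
  simp [Finsupp.weight_apply, Finsupp.sum_fintype, Fin.sum_univ_two]

namespace MvPolynomial

theorem isRelPrime_X_pow_X_pow {σ K : Type*} [Field K] {i j : σ} (hij : i ≠ j) (m n : ℕ) :
    IsRelPrime (X i ^ m : MvPolynomial σ K) (X j ^ n) :=
  (X_prime.irreducible.isRelPrime_iff_not_dvd.mpr (by simpa using hij)).pow

variable {k : Type*} [CommRing k]

theorem coeff_eq_zero_of_mem_span_X_pow {σ : Type*} {s : Set σ} {n : ℕ} {r : MvPolynomial σ k}
    (hr : r ∈ Ideal.span ((fun i => X i ^ n) '' s)) {m : σ →₀ ℕ} (hm : ∀ i ∈ s, m i < n) :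
    coeff m r = 0 := by
  have hspan : (fun i => (X i ^ n : MvPolynomial σ k)) '' s =
      (fun d => monomial d (1 : k)) '' ((fun i => Finsupp.single i n) '' s) := by
    simp [Set.image_image, X_pow_eq_monomial]
  rw [hspan, mem_ideal_span_monomial_image] at hr
  by_contra hne
  obtain ⟨_, ⟨i, hi, rfl⟩, hle⟩ := hr m (mem_support_iff.mpr hne)
  exact (hm i hi).not_ge (by simpa using hle i)

theorem aeval_X_one_eq_sum (r : MvPolynomial (Fin 2) k) :
    aeval ![Polynomial.X, 1] r =
      ∑ m ∈ r.support, Polynomial.C (coeff m r) * Polynomial.X ^ m 0 := by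
  conv_lhs => rw [r.as_sum, map_sum]
  refine Finset.sum_congr rfl fun m _ => ?_
  simp [aeval_monomial, Finsupp.prod_fintype, Fin.prod_univ_two]

theorem IsWeightedHomogeneous.coeff_aeval_X_one {w : Fin 2 → ℤ} (hw : w 1 ≠ 0)
    {r : MvPolynomial (Fin 2) k} {E : ℤ} (hr : r.IsWeightedHomogeneous w E) {m : Fin 2 →₀ ℕ}
    (hm : Finsupp.weight w m = E) : (aeval ![Polynomial.X, 1] r).coeff (m 0) = coeff m r := by
  have hinj : ∀ d ∈ r.support, d 0 = m 0 → d = m := by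
    intro d hd h0
    have hd := hr (mem_support_iff.mp hd)
    rw [← hm, Finsupp.weight_fin_two, Finsupp.weight_fin_two, h0] at hd
    have h1 : d 1 = m 1 := by simpa [hw] using hd
    ext i
    fin_cases i <;> assumption
  rw [aeval_X_one_eq_sum, Polynomial.finsetSum_coeff]
  simp_rw [Polynomial.coeff_C_mul_X_pow]
  rw [Finset.sum_eq_single m]
  · simp
  · intro d hd hne
    rw [if_neg fun h => hne (hinj d hd h.symm)]
  · intro hm
    simp [notMem_support_iff.mp hm]

/-- The monomials of weight `E` are `Y^(x + 3i) Z^(z - 5i)`, where `Y^x Z^z` has the least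
`Y`-degree; `g` collects their coefficients. -/
theorem IsWeightedHomogeneous.exists_aeval_X_one_eq {A : MvPolynomial (Fin 2) k} {E : ℤ}
    (hA : A ≠ 0) (hhom : A.IsWeightedHomogeneous ![10, 6] E) :
    ∃ x z : ℕ, ∃ g : k[X], 10 * (x : ℤ) + 6 * z = E ∧ g ≠ 0 ∧ g.natDegree ≤ z / 5 ∧
      aeval ![Polynomial.X, 1] A = Polynomial.X ^ x * Polynomial.expand k 3 g := by
  have hweight : ∀ m ∈ A.support, 10 * (m 0 : ℤ) + 6 * m 1 = E := fun m hm => by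
    simpa [Finsupp.weight_fin_two, mul_comm] using hhom (mem_support_iff.mp hm)
  obtain ⟨mn, hmn, hmin⟩ := A.support.exists_min_image (· 0) (support_nonempty.mpr hA)
  have hstep : ∀ m ∈ A.support,
      mn 0 + 3 * ((m 0 - mn 0) / 3) = m 0 ∧ 5 * ((m 0 - mn 0) / 3) ≤ mn 1 := by
    intro m hm
    have := hweight m hm
    have := hweight mn hmn
    have := hmin m hm
    omega
  refine ⟨mn 0, mn 1, ∑ m ∈ A.support, Polynomial.monomial ((m 0 - mn 0) / 3) (coeff m A),
    hweight mn hmn, fun hg => ?_, ?_, ?_⟩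
  · have hcoeff := congrArg (Polynomial.coeff · 0) hg
    simp only [Polynomial.finsetSum_coeff, Polynomial.coeff_monomial,
      Polynomial.coeff_zero] at hcoeff
    rw [Finset.sum_eq_single mn, if_pos (by simp)] at hcoeff
    · exact mem_support_iff.mp hmn hcoeff
    · intro m hm hne
      refine if_neg fun h => hne ?_
      have := hweight m hm
      have := hweight mn hmn
      have := hmin m hm
      ext i
      fin_cases i <;> simp <;> omega
    · exact fun h => (h hmn).elim
  · exact Polynomial.natDegree_sum_le_of_forall_le _ _ fun m hm =>
      (Polynomial.natDegree_monomial_le _).trans (by have := hstep m hm; omega)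
  · rw [aeval_X_one_eq_sum, map_sum, Finset.mul_sum]
    refine Finset.sum_congr rfl fun m hm => ?_
    rw [Polynomial.expand_monomial, ← Polynomial.C_mul_X_pow_eq_monomial, mul_left_comm,
      ← pow_add, mul_comm _ 3, (hstep m hm).1]

theorem IsWeightedHomogeneous.cross_apply {σ M : Type*} [AddCommGroup M] {w : σ → M}
    {a b : Fin 3 → MvPolynomial σ k} {D : Fin 3 → M} {u v : M}
    (ha : ∀ i, (a i).IsWeightedHomogeneous w (u - D i))
    (hb : ∀ i, (b i).IsWeightedHomogeneous w (v - D i)) (j : Fin 3) :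
    ((a ⨯₃ b) j).IsWeightedHomogeneous w (u + v - (D 0 + D 1 + D 2) + D j) := by
  have key : ∀ i i' E, (u - D i) + (v - D i') = E → (u - D i') + (v - D i) = E →
      (a i * b i' - a i' * b i).IsWeightedHomogeneous w E := by
    intro i i' E h h'
    rw [← h] at h' ⊢
    exact ((ha i).mul (hb i')).sub (h' ▸ (ha i').mul (hb i))
  fin_cases j <;> simp <;> exact key _ _ _ (by abel) (by abel)

end MvPolynomial

section Syzygy

variable {R : Type*} [CommRing R]

theorem syzMap_apply {n : ℕ} (g x : Fin n → R) : syzMap g x = x ⬝ᵥ g := by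
  simp [syzMap, dotProduct]

theorem cross_mem_ker_syzMap (g w : Fin 3 → R) : g ⨯₃ w ∈ LinearMap.ker (syzMap g) := by
  rw [LinearMap.mem_ker, syzMap_apply, dotProduct_comm, dot_self_cross]

variable [IsDomain R]

theorem dvd_apply_of_cross_eq_smul {g u v : Fin 3 → R} {c : R} (hg : g ≠ 0) (hu : u ⬝ᵥ g = 0)
    (hspan : ∀ w, ∃ α β : R, g ⨯₃ w = α • u + β • v) (huv : u ⨯₃ v = c • g) (j : Fin 3) :
    c ∣ u j := by
  obtain ⟨α, β, hαβ⟩ := hspan (Pi.single j 1)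
  have key : u j • g = (β * c) • g :=
    calc u j • g = u ⨯₃ (g ⨯₃ Pi.single j 1) := by
          rw [cross_cross_eq_smul_sub_smul', dotProduct_single_one, dotProduct_comm, hu, zero_smul,
            sub_zero]
      _ = (β * c) • g := by
          rw [hαβ, map_add, map_smul, map_smul, cross_self, huv, smul_zero, zero_add, smul_smul]
  exact ⟨β, by rw [smul_left_injective R hg key, mul_comm]⟩

variable [DecompositionMonoid R]

theorem exists_eq_smul_of_cross_eq_zero {g Δ : Fin 3 → R} (hg1 : g 1 ≠ 0)
    (hrel : IsRelPrime (g 1) (g 2)) (h : g ⨯₃ Δ = 0) : ∃ c : R, Δ = c • g := by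
  have h0 : g 1 * Δ 2 - g 2 * Δ 1 = 0 := by simpa [cross_apply] using congrFun h 0
  have h2 : g 0 * Δ 1 - g 1 * Δ 0 = 0 := by simpa [cross_apply] using congrFun h 2
  obtain ⟨c, hc⟩ := hrel.dvd_of_dvd_mul_left (z := Δ 1) ⟨Δ 2, by linear_combination -h0⟩
  refine ⟨c, funext fun i => ?_⟩
  fin_cases i
  · show Δ 0 = c * g 0
    exact mul_left_cancel₀ hg1 (by linear_combination -h2 + g 0 * hc)
  · show Δ 1 = c * g 1
    rw [hc, mul_comm]
  · show Δ 2 = c * g 2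
    exact mul_left_cancel₀ hg1 (by linear_combination h0 + g 2 * hc)

theorem exists_isUnit_cross_basis_eq_smul {g : Fin 3 → R} (hg1 : g 1 ≠ 0)
    (hrel : IsRelPrime (g 1) (g 2)) (b : Module.Basis (Fin 2) R (LinearMap.ker (syzMap g))) :
    ∃ c : R, IsUnit c ∧ (b 0 : Fin 3 → R) ⨯₃ b 1 = c • g := by
  set u : Fin 3 → R := ↑(b 0)
  set v : Fin 3 → R := ↑(b 1)
  have hu : u ⬝ᵥ g = 0 := by rw [← syzMap_apply]; exact LinearMap.mem_ker.mp (b 0).2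
  have hv : v ⬝ᵥ g = 0 := by rw [← syzMap_apply]; exact LinearMap.mem_ker.mp (b 1).2
  have hg : g ≠ 0 := fun h => hg1 (by simp [h])
  obtain ⟨c, hc⟩ := exists_eq_smul_of_cross_eq_zero (Δ := u ⨯₃ v) hg1 hrel (by
    rw [cross_cross_eq_smul_sub_smul', dotProduct_comm g v, hv, hu, zero_smul, zero_smul,
      sub_zero])
  have hspan : ∀ w, ∃ α β : R, g ⨯₃ w = α • u + β • v := fun w => by
    have h := congrArg Subtype.val (b.sum_repr ⟨_, cross_mem_ker_syzMap g w⟩)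
    rw [Fin.sum_univ_two, Submodule.coe_add, Submodule.coe_smul, Submodule.coe_smul] at h
    exact ⟨_, _, h.symm⟩
  have hcu : ∀ j, c ∣ u j := dvd_apply_of_cross_eq_smul hg hu hspan hc
  have hcv : ∀ j, c ∣ v j := fun j => neg_dvd.mp <|
    dvd_apply_of_cross_eq_smul hg hv
      (fun w => let ⟨α, β, h⟩ := hspan w; ⟨β, α, by rw [h, add_comm]⟩)
      (by rw [← cross_anticomm, hc, neg_smul]) j
  have hc0 : c ≠ 0 := by
    rintro rfl
    exact b.ne_zero 0 (Subtype.ext (funext fun j => zero_dvd_iff.mp (hcu j)))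
  have hdvd : ∀ i, c ∣ g i := fun i => (mul_dvd_mul_iff_left hc0).mp <| by
    have h : c * c ∣ (u ⨯₃ v) i := by
      fin_cases i <;> simp [cross_apply] <;>
        exact (mul_dvd_mul (hcu _) (hcv _)).sub (mul_dvd_mul (hcu _) (hcv _))
    rwa [hc, Pi.smul_apply, smul_eq_mul] at h
  exact ⟨c, hrel (hdvd 1) (hdvd 2), hc⟩

end Syzygy

open MvPolynomial

section WeightBounds

variable {k : Type*} [Field k] {p l : ℕ} [CharP k p]

theorem weight_bounds_of_mul_mem_span (hpl : p = 60 * l + 1) {A : MvPolynomial (Fin 2) k}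
    {E : ℤ} (hA : A ≠ 0) (hhom : A.IsWeightedHomogeneous ![10, 6] E)
    (hmem : A * (X 0 ^ 3 + X 1 ^ 5) ^ (30 * l) ∈ Ideal.span {X 0 ^ p, X 1 ^ p}) :
    30 * l + 6 ≤ E ∧ E ≠ 30 * l + 8 := by
  obtain ⟨x, z, g, hE, hg, hdeg, hAg⟩ := hhom.exists_aeval_X_one_eq hA
  set f : MvPolynomial (Fin 2) k := (X 0 ^ 3 + X 1 ^ 5) ^ (30 * l)
  have hf_hom : f.IsWeightedHomogeneous ![(10 : ℤ), 6] (900 * l) := by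
    have hY : (X 0 ^ 3 : MvPolynomial (Fin 2) k).IsWeightedHomogeneous ![(10 : ℤ), 6] 30 := by
      simpa using (isWeightedHomogeneous_X k ![(10 : ℤ), 6] 0).pow 3
    have hZ : (X 1 ^ 5 : MvPolynomial (Fin 2) k).IsWeightedHomogeneous ![(10 : ℤ), 6] 30 := by
      simpa using (isWeightedHomogeneous_X k ![(10 : ℤ), 6] 1).pow 5
    convert (hY.add hZ).pow (30 * l) using 1
    ring
  have hf : MvPolynomial.aeval ![Polynomial.X, 1] f =
      Polynomial.expand k 3 ((Polynomial.X + 1) ^ (30 * l)) := by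
    simp [f]
  have hmem' : A * f ∈ Ideal.span ((fun i => X i ^ p) '' {0, 1}) := by
    rwa [Set.image_pair]
  by_contra hE'
  refine hg (Polynomial.eq_zero_of_coeff_mul_X_add_one_pow_eq_zero (c := z / 5 + 1)
    (n := 30 * l) (a := (z + 90 * l + 4) / 5) (p := p) ?_ (by omega) (by omega) fun j hj hj' => ?_)
  · exact (Polynomial.degree_le_of_natDegree_le hdeg).trans_lt
      (WithBot.coe_lt_coe.mpr (Nat.lt_succ_self _))
  set m : Fin 2 →₀ ℕ := Finsupp.single 0 (x + 3 * j) + Finsupp.single 1 (z + 150 * l - 5 * j)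
  have hm0 : m 0 = x + 3 * j := by simp [m]
  have hm1 : m 1 = z + 150 * l - 5 * j := by simp [m]
  calc (g * (Polynomial.X + 1) ^ (30 * l)).coeff j
      = (MvPolynomial.aeval ![Polynomial.X, 1] (A * f)).coeff (m 0) := by
        rw [map_mul, hAg, hf, mul_assoc, ← map_mul, hm0, add_comm x, Polynomial.coeff_X_pow_mul,
          Polynomial.coeff_expand_mul' (by norm_num)]
    _ = coeff m (A * f) := (hhom.mul hf_hom).coeff_aeval_X_one (by simp) (by
        rw [Finsupp.weight_fin_two, hm0, hm1]
        simp
        omega)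
    _ = 0 := coeff_eq_zero_of_mem_span_X_pow hmem' (by simp; omega)

theorem syzygy_degree_bounds (hpl : p = 60 * l + 1) {s : Fin 3 → MvPolynomial (Fin 2) k}
    (hs : s ∈ LinearMap.ker (syzMap ![(X 0 ^ 3 + X 1 ^ 5) ^ ((p - 1) / 2), X 0 ^ p, X 1 ^ p]))
    (hs0 : s ≠ 0) {d : ℤ}
    (hhom : ∀ i, (s i).IsWeightedHomogeneous ![10, 6]
      (d - ![15 * ((p : ℤ) - 1), 10 * p, 6 * p] i)) :
    930 * l + 6 ≤ d ∧ d ≠ 930 * l + 8 ∧ Even d := by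
  have hsyz : s 0 * (X 0 ^ 3 + X 1 ^ 5) ^ (30 * l) + s 1 * X 0 ^ p + s 2 * X 1 ^ p = 0 := by
    rw [LinearMap.mem_ker, syzMap_apply] at hs
    simpa [dotProduct, Fin.sum_univ_three, show (p - 1) / 2 = 30 * l by omega] using hs
  by_cases hA : s 0 = 0
  · have hB : s 1 ≠ 0 := by
      intro hB
      have hC : s 2 = 0 := by simpa [hA, hB, X_ne_zero] using hsyz
      exact hs0 (funext fun i => by fin_cases i <;> assumption)
    obtain ⟨q, hq⟩ : X 1 ^ p ∣ s 1 :=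
      (isRelPrime_X_pow_X_pow (i := (1 : Fin 2)) one_ne_zero p p).dvd_of_dvd_mul_right
      ⟨-s 2, by linear_combination hsyz - (X 0 ^ 3 + X 1 ^ 5) ^ (30 * l) * hA⟩
    obtain ⟨m, hm⟩ := exists_coeff_ne_zero (right_ne_zero_of_mul (hq ▸ hB))
    have hw := hhom 1 (d := Finsupp.single 1 p + m) (by
      rwa [hq, X_pow_eq_monomial, coeff_monomial_mul, one_mul])
    simp [Finsupp.weight_fin_two] at hw
    exact ⟨by omega, by omega, Int.even_iff.mpr (by omega)⟩
  · have hmem : s 0 * (X 0 ^ 3 + X 1 ^ 5) ^ (30 * l) ∈ Ideal.span {X 0 ^ p, X 1 ^ p} :=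
      Ideal.mem_span_pair.mpr ⟨-s 1, -s 2, by linear_combination -hsyz⟩
    obtain ⟨hE, hE'⟩ := weight_bounds_of_mul_mem_span hpl hA (hhom 0) hmem
    obtain ⟨m, hm⟩ := exists_coeff_ne_zero hA
    have hw := hhom 0 hm
    simp [Finsupp.weight_fin_two] at hw hE hE'
    exact ⟨by omega, by omega, Int.even_iff.mpr (by omega)⟩

end WeightBounds

theorem stmt_15_general {k : Type*} [Field k] (p l : ℕ) [CharP k p]
    (hpl : p = 60 * l + 1) :
    let P := MvPolynomial (Fin 2) k
    let Y : P := MvPolynomial.X 0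
    let Z : P := MvPolynomial.X 1
    let w : Fin 2 → ℤ := ![10, 6]
    let G : Fin 3 → P := ![(Y ^ 3 + Z ^ 5) ^ ((p - 1) / 2), Y ^ p, Z ^ p]
    let D : Fin 3 → ℤ := ![15 * ((p : ℤ) - 1), 10 * p, 6 * p]
    ∀ (u v : ℤ) (bs : Module.Basis (Fin 2) P (LinearMap.ker (syzMap G))),
      (∀ i, MvPolynomial.IsWeightedHomogeneous w ((bs 0 : Fin 3 → P) i) (u - D i)) →
      (∀ i, MvPolynomial.IsWeightedHomogeneous w ((bs 1 : Fin 3 → P) i) (v - D i)) →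
      (u - v).natAbs = 4 := by
  intro P Y Z w G D u v bs hu hv
  obtain ⟨c, hc_unit, hc⟩ := exists_isUnit_cross_basis_eq_smul (g := G)
    (pow_ne_zero _ (X_ne_zero 0)) (isRelPrime_X_pow_X_pow (by decide) p p) bs
  obtain ⟨r, hr, rfl⟩ := isUnit_iff_eq_C_of_isReduced.mp hc_unit
  have hcross : ((bs 0 : Fin 3 → P) ⨯₃ bs 1) 2 = C r * X 1 ^ p := by rw [hc]; rfl
  have hsum : u + v - (D 0 + D 1 + D 2) + D 2 = 0 + p • 6 :=
    (IsWeightedHomogeneous.cross_apply hu hv 2).inj_right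
      (hcross ▸ mul_ne_zero (C_ne_zero.mpr hr.ne_zero) (pow_ne_zero _ (X_ne_zero 1)))
      (hcross ▸ (isWeightedHomogeneous_C w r).mul ((isWeightedHomogeneous_X k w 1).pow p))
  obtain ⟨hu₁, hu₂, ⟨a, rfl⟩⟩ := syzygy_degree_bounds hpl (bs 0).2
    (fun h => bs.ne_zero 0 (Subtype.ext h)) hu
  obtain ⟨hv₁, hv₂, ⟨b, rfl⟩⟩ := syzygy_degree_bounds hpl (bs 1).2
    (fun h => bs.ne_zero 1 (Subtype.ext h)) hv
  simp [D] at hsum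
  omega

/-- Let `char k = p = 60l + 1`. Over `k[Y,Z]` graded with
`deg Y = 10`, `deg Z = 6`, the second syzygy module
`Syz((Y³+Z⁵)^{(p-1)/2}, Y^p, Z^p)` splits as `k[Y,Z](m) ⊕ k[Y,Z](n)`, i.e. is
free on two homogeneous generators, whose (total) degrees `u, v` satisfy
`|u - v| = 4` (equivalently `δ((p-1)/2, p/3, p/5) = 2/15` for Han's
δ-function, multiplied by `30`). A generator has total degree `u` when its
component against the generator of degree `Dᵢ` is weighted homogeneous of
degree `u - Dᵢ`, where `D = (15(p-1), 10p, 6p)`. -/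
theorem stmt_15 {k : Type*} [Field k] (p l : ℕ) (hp : p.Prime) [CharP k p]
    (hpl : p = 60 * l + 1) :
    let P := MvPolynomial (Fin 2) k
    let Y : P := MvPolynomial.X 0
    let Z : P := MvPolynomial.X 1
    let w : Fin 2 → ℤ := ![10, 6]
    let G : Fin 3 → P := ![(Y ^ 3 + Z ^ 5) ^ ((p - 1) / 2), Y ^ p, Z ^ p]
    let D : Fin 3 → ℤ := ![15 * ((p : ℤ) - 1), 10 * p, 6 * p]
    ∀ (u v : ℤ) (bs : Module.Basis (Fin 2) P (LinearMap.ker (syzMap G))),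
      (∀ i, MvPolynomial.IsWeightedHomogeneous w ((bs 0 : Fin 3 → P) i) (u - D i)) →
      (∀ i, MvPolynomial.IsWeightedHomogeneous w ((bs 1 : Fin 3 → P) i) (v - D i)) →
      (u - v).natAbs = 4 :=
  stmt_15_general p l hpl
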